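/- (Deterministic core of random Logan) Let f: Z_N → C, M, S ⊆ Z_N, ε ≥ 0 with ||f̂||_{L^1(S^c)} ≤ (ε/N)||f̂||_{L^1(Z_N)}. Suppose g agrees with f off M, ||ĝ||_{L^1(Z_N)} ≤ ||f̂||_{L^1(Z_N)}, and h = f − g (supported in M) satisfies the inequality ||ĥ||_{L^1(S)} ≤ |S|^{1/2} N^{-1/2} K ||ĥ||_{L^1(Z_N)} for some K > 0 with 2|S|^{1/2} N^{-1/2} K ≤ 1/2. Then ||ĥ||_{L^1(Z_N)} ≤ (4ε/N)·||f̂||_{L^1(Z_N)}. -/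

import Mathlib

open Finset

/-- The discrete Fourier transform on `ZMod N`:
`f̂(ω) = N^{-1/2} ∑_x f(x) e^{-2πiωx/N}`. -/
noncomputable def dft {N : ℕ} [NeZero N] (f : ZMod N → ℂ) (ω : ZMod N) : ℂ :=
  (Real.sqrt N : ℂ)⁻¹ *
    ∑ x : ZMod N, f x * Complex.exp (-(2 * Real.pi * Complex.I) * ((ω.val * x.val : ℕ) : ℂ) / (N : ℂ))

/-- `||u||_{L^1(A)} = ∑_{x ∈ A} |u(x)|`. -/
noncomputable def l1 {N : ℕ} [NeZero N] (A : Finset (ZMod N)) (u : ZMod N → ℂ) : ℝ :=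
  ∑ x ∈ A, ‖u x‖

/-!
With `h = f - g`, minimality `‖ĝ‖₁ ≤ ‖f̂‖₁` and the triangle inequality show that the mass of `ĥ`
off `S` is paid for by its mass on `S` and by the small mass of `f̂` off `S`:
`‖ĥ‖₁ ≤ 2‖ĥ‖_{L¹(S)} + 2‖f̂‖_{L¹(Sᶜ)}`. The uncertainty bound `‖ĥ‖_{L¹(S)} ≤ δ‖ĥ‖₁` with
`2δ ≤ 1/2` absorbs the first term, leaving `‖ĥ‖₁ ≤ 4‖f̂‖_{L¹(Sᶜ)} ≤ (4ε/N)‖f̂‖₁`.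
-/

theorem dft_sub {N : ℕ} [NeZero N] (f g : ZMod N → ℂ) : dft (f - g) = dft f - dft g := by
  ext ω
  simp only [dft, Pi.sub_apply, sub_mul, Finset.sum_sub_distrib, mul_sub]

section L1

variable {N : ℕ} [NeZero N]

theorem l1_nonneg (A : Finset (ZMod N)) (u : ZMod N → ℂ) : 0 ≤ l1 A u :=
  Finset.sum_nonneg fun _ _ => norm_nonneg _

theorem l1_add_l1_compl (S : Finset (ZMod N)) (u : ZMod N → ℂ) :
    l1 S u + l1 Sᶜ u = l1 univ u :=
  Finset.sum_add_sum_compl S _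

theorem l1_add_le (A : Finset (ZMod N)) (u v : ZMod N → ℂ) :
    l1 A (u + v) ≤ l1 A u + l1 A v := by
  rw [l1, l1, l1, ← Finset.sum_add_distrib]
  exact Finset.sum_le_sum fun x _ => norm_add_le (u x) (v x)

theorem l1_neg (A : Finset (ZMod N)) (u : ZMod N → ℂ) : l1 A (-u) = l1 A u := by
  simp only [l1, Pi.neg_apply, norm_neg]

theorem l1_sub_le_of_l1_le (S : Finset (ZMod N)) {u v : ZMod N → ℂ}
    (hvu : l1 univ v ≤ l1 univ u) :
    l1 univ (u - v) ≤ 2 * l1 S (u - v) + 2 * l1 Sᶜ u := by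
  have hu_on : l1 S u ≤ l1 S v + l1 S (u - v) := by
    simpa using l1_add_le S v (u - v)
  have hoff : l1 Sᶜ (u - v) ≤ l1 Sᶜ v + l1 Sᶜ u := by
    simpa [l1_neg, sub_eq_neg_add] using l1_add_le Sᶜ (-v) u
  rw [← l1_add_l1_compl S u, ← l1_add_l1_compl S v] at hvu
  rw [← l1_add_l1_compl S (u - v)]
  linarith

end L1

theorem stmt12_general {N : ℕ} [NeZero N] (f g : ZMod N → ℂ) (S : Finset (ZMod N))
    (ε K : ℝ)
    (hconc : l1 Sᶜ (dft f) ≤ ε / N * l1 univ (dft f))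
    (hmin : l1 univ (dft g) ≤ l1 univ (dft f))
    (hTal : l1 S (dft (f - g)) ≤
      Real.sqrt S.card * (Real.sqrt N)⁻¹ * K * l1 univ (dft (f - g)))
    (hsmall : 2 * Real.sqrt S.card * (Real.sqrt N)⁻¹ * K ≤ 1 / 2) :
    l1 univ (dft (f - g)) ≤ 4 * ε / N * l1 univ (dft f) := by
  rw [dft_sub] at hTal ⊢
  have hsplit := l1_sub_le_of_l1_le S hmin
  have habsorb := mul_le_mul_of_nonneg_right hsmall (l1_nonneg univ (dft f - dft g))
  have hquarter : l1 univ (dft f - dft g) ≤ 4 * l1 Sᶜ (dft f) := by linarith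
  calc l1 univ (dft f - dft g) ≤ 4 * l1 Sᶜ (dft f) := hquarter
    _ ≤ 4 * (ε / N * l1 univ (dft f)) := by linarith
    _ = 4 * ε / N * l1 univ (dft f) := by ring

/-- Deterministic core of random Logan. -/
theorem stmt12 {N : ℕ} [NeZero N] (f g : ZMod N → ℂ) (M S : Finset (ZMod N))
    (ε K : ℝ) (hε : 0 ≤ ε) (hK : 0 < K)
    (hconc : l1 Sᶜ (dft f) ≤ ε / N * l1 univ (dft f))
    (hagree : ∀ x ∉ M, g x = f x)
    (hmin : l1 univ (dft g) ≤ l1 univ (dft f))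
    (hTal : l1 S (dft (f - g)) ≤
      Real.sqrt S.card * (Real.sqrt N)⁻¹ * K * l1 univ (dft (f - g)))
    (hsmall : 2 * Real.sqrt S.card * (Real.sqrt N)⁻¹ * K ≤ 1 / 2) :
    l1 univ (dft (f - g)) ≤ 4 * ε / N * l1 univ (dft f) :=
  stmt12_general f g S ε K hconc hmin hTal hsmall
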